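/- arXiv:2504.19217 — 2 statements merged into one kernel-verified Lean document; each statement's English description precedes it below -/
import Mathlib

section
/- Let Ω ⊆ ℝ^m be a nonempty open set with diam(Ω) < ∞. Then for t ≥ (diam Ω)², the function t ↦ t^{(2m-1)/4}·H_Ω(t) is non-increasing. -/
open MeasureTheory Real Set Filter

noncomputable def heatKernel (m : ℕ) (t : ℝ) (x y : EuclideanSpace ℝ (Fin m)) : ℝ :=
  (4 * π * t) ^ (-(m : ℝ) / 2) * Real.exp (-‖x - y‖ ^ 2 / (4 * t))

noncomputable def heatContent (m : ℕ) (Ω : Set (EuclideanSpace ℝ (Fin m))) (t : ℝ) : ℝ :=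
  ∫ x in Ω, ∫ y in Ω, heatKernel m t x y

/-!
Since `t ^ ((2m - 1) / 4) p_t(x, y) = (4π) ^ (-m / 2) t ^ (-1 / 4) exp (-|x - y|² / (4t))` and
`t ↦ t ^ (-1 / 4) exp (-c / t)` decreases for `t ≥ 4c`, the rescaled integrand decreases pointwise
on `Ω × Ω` once `t ≥ (diam Ω)² ≥ |x - y|²`; integrate over `Ω × Ω` (Fubini). If `diam Ω = 0`,
then `Ω` is a null set and the heat content vanishes.
-/

/- In the exponent, `α log (t / s) ≥ α (1 - s / t)` beats the gain `c (1 / s - 1 / t)` as soon as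
`c ≤ α s`. -/
lemma rpow_neg_mul_exp_neg_div_le {α c s t : ℝ} (hα : 0 ≤ α) (hs : 0 < s) (hst : s ≤ t)
    (hcs : c ≤ α * s) : t ^ (-α) * exp (-c / t) ≤ s ^ (-α) * exp (-c / s) := by
  have ht : 0 < t := hs.trans_le hst
  rw [rpow_def_of_pos hs, rpow_def_of_pos ht, ← exp_add, ← exp_add, exp_le_exp]
  have hlog : 1 - s / t ≤ log t - log s := by
    rw [← log_div ht.ne' hs.ne', ← inv_div]
    exact one_sub_inv_le_log_of_pos (div_pos ht hs)
  have hgain : c / s - c / t ≤ α * (1 - s / t) := by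
    have key : c / s - c / t = c * (t - s) / (s * t) := by field_simp
    have key' : α * (1 - s / t) = α * s * (t - s) / (s * t) := by field_simp
    rw [key, key']
    gcongr
  nlinarith [mul_le_mul_of_nonneg_left hlog hα, neg_div s c, neg_div t c]

section HeatKernel

variable {m : ℕ} {t : ℝ}

lemma rpow_mul_heatKernel (ht : 0 < t) (x y : EuclideanSpace ℝ (Fin m)) :
    t ^ ((2 * (m : ℝ) - 1) / 4) * heatKernel m t x y =
      (4 * π) ^ (-(m : ℝ) / 2) * (t ^ (-(1 / 4 : ℝ)) * exp (-(‖x - y‖ ^ 2 / 4) / t)) := by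
  have hpow : t ^ ((2 * (m : ℝ) - 1) / 4) * t ^ (-(m : ℝ) / 2) = t ^ (-(1 / 4 : ℝ)) := by
    rw [← rpow_add ht]
    ring_nf
  have hexp : -‖x - y‖ ^ 2 / (4 * t) = -(‖x - y‖ ^ 2 / 4) / t := by ring
  rw [heatKernel, mul_rpow (by positivity) ht.le, hexp, ← hpow]
  ring

lemma rpow_mul_heatKernel_le {s : ℝ} (hs : 0 < s) (hst : s ≤ t)
    {x y : EuclideanSpace ℝ (Fin m)} (hxy : ‖x - y‖ ^ 2 ≤ s) :
    t ^ ((2 * (m : ℝ) - 1) / 4) * heatKernel m t x y ≤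
      s ^ ((2 * (m : ℝ) - 1) / 4) * heatKernel m s x y := by
  rw [rpow_mul_heatKernel (hs.trans_le hst), rpow_mul_heatKernel hs]
  refine mul_le_mul_of_nonneg_left ?_ (by positivity)
  exact rpow_neg_mul_exp_neg_div_le (α := 1 / 4) (c := ‖x - y‖ ^ 2 / 4) (by norm_num) hs hst
    (by linarith)

lemma continuous_heatKernel (m : ℕ) (t : ℝ) :
    Continuous fun z : EuclideanSpace ℝ (Fin m) × EuclideanSpace ℝ (Fin m) ↦
      heatKernel m t z.1 z.2 := by
  unfold heatKernel
  fun_prop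

lemma norm_heatKernel_le (ht : 0 < t) (x y : EuclideanSpace ℝ (Fin m)) :
    ‖heatKernel m t x y‖ ≤ (4 * π * t) ^ (-(m : ℝ) / 2) := by
  have hexp : exp (-‖x - y‖ ^ 2 / (4 * t)) ≤ 1 := exp_le_one_iff.mpr (by
    apply div_nonpos_of_nonpos_of_nonneg <;> [simp; positivity])
  rw [heatKernel, Real.norm_of_nonneg (by positivity)]
  exact mul_le_of_le_one_right (by positivity) hexp

lemma integrableOn_heatKernel (ht : 0 < t) {Ω : Set (EuclideanSpace ℝ (Fin m))}
    (hΩ : volume Ω ≠ ⊤) :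
    IntegrableOn (fun z ↦ heatKernel m t z.1 z.2) (Ω ×ˢ Ω) (volume.prod volume) :=
  .of_bound (by simpa [Measure.prod_prod] using ENNReal.mul_lt_top hΩ.lt_top hΩ.lt_top)
    (continuous_heatKernel m t).aestronglyMeasurable _
    (.of_forall fun z ↦ norm_heatKernel_le ht z.1 z.2)

lemma heatContent_eq_setIntegral_prod (ht : 0 < t) {Ω : Set (EuclideanSpace ℝ (Fin m))}
    (hΩ : volume Ω ≠ ⊤) :
    heatContent m Ω t = ∫ z in Ω ×ˢ Ω, heatKernel m t z.1 z.2 ∂volume.prod volume :=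
  (setIntegral_prod _ (integrableOn_heatKernel ht hΩ)).symm

lemma heatContent_measure_zero {Ω : Set (EuclideanSpace ℝ (Fin m))} (hΩ : volume Ω = 0) :
    heatContent m Ω t = 0 := by
  simp [heatContent, Measure.restrict_eq_zero.mpr hΩ]

end HeatKernel

lemma ae_restrict_mem_closure {X : Type*} [TopologicalSpace X] [MeasurableSpace X]
    [OpensMeasurableSpace X] (μ : Measure X) (s : Set X) : ∀ᵐ x ∂μ.restrict s, x ∈ closure s :=
  ae_restrict_of_ae_restrict_of_subset subset_closure
    (ae_restrict_mem isClosed_closure.measurableSet)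

theorem stmt_18_general (m : ℕ) (hm : 1 ≤ m) (Ω : Set (EuclideanSpace ℝ (Fin m)))
    (hbd : Bornology.IsBounded Ω) :
    AntitoneOn (fun t : ℝ => t ^ ((2 * (m : ℝ) - 1) / 4) * heatContent m Ω t)
      (Set.Ici ((Metric.diam Ω) ^ 2)) := by
  intro a ha b _ hab
  rw [mem_Ici] at ha
  have hΩ : volume Ω ≠ ⊤ := hbd.measure_lt_top.ne
  rcases (sq_nonneg _ |>.trans ha).eq_or_lt with rfl | ha0
  · have : Nonempty (Fin m) := ⟨⟨0, hm⟩⟩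
    have hsub : Ω.Subsingleton := not_nontrivial_iff.mp fun hnt ↦
      (pow_pos (Metric.diam_pos hnt hbd) 2).not_ge ha
    simp [heatContent_measure_zero (hsub.measure_zero _)]
  have hb0 : 0 < b := ha0.trans_le hab
  simp only [heatContent_eq_setIntegral_prod ha0 hΩ, heatContent_eq_setIntegral_prod hb0 hΩ,
    ← integral_const_mul]
  refine integral_mono_ae ((integrableOn_heatKernel hb0 hΩ).const_mul _)
    ((integrableOn_heatKernel ha0 hΩ).const_mul _) ?_
  filter_upwards [ae_restrict_mem_closure _ (Ω ×ˢ Ω)] with z hz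
  rw [closure_prod_eq] at hz
  refine rpow_mul_heatKernel_le ha0 hab (le_trans ?_ ha)
  rw [← dist_eq_norm, ← Metric.diam_closure]
  gcongr
  exact Metric.dist_le_diam_of_mem hbd.closure hz.1 hz.2

theorem stmt_18 (m : ℕ) (hm : 1 ≤ m) (Ω : Set (EuclideanSpace ℝ (Fin m)))
    (hne : Ω.Nonempty) (hopen : IsOpen Ω) (hbd : Bornology.IsBounded Ω) :
    AntitoneOn (fun t : ℝ => t ^ ((2 * (m : ℝ) - 1) / 4) * heatContent m Ω t)
      (Set.Ici ((Metric.diam Ω) ^ 2)) :=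
  stmt_18_general m hm Ω hbd
end

section
/- For a nonempty open bounded set Ω ⊆ ℝ^m, the function t ↦ -H_Ω'(t) is completely monotone on (0,∞); in particular (-1)^k H_Ω^{(k+1)}(t) ≤ 0 for all k ≥ 0 and t > 0. -/
/-! Fourier-transforming the Gaussian kernel writes the heat content as
`H_Ω(t) = (2π)^{-m} ∫ e^{-t|ξ|²} |χ̂(ξ)|² dξ`, where `χ̂` is the characteristic function of Lebesgue
measure restricted to `Ω`: the factor `e^{i⟨x - y, ξ⟩}` splits, and its integral over `Ω × Ω` is
`χ̂(ξ) · conj (χ̂(ξ))`. So `H_Ω` is the Laplace transform of a nonnegative density in the variable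
`|ξ|²`; differentiating `n` times under the integral brings down `(-|ξ|²)^n`, whence
`(-1)^n H_Ω^{(n)} ≥ 0`. Every such moment converges because half of the Gaussian decay absorbs any
power of `|ξ|²`. -/

open MeasureTheory Real Set Filter

open scoped Topology RealInnerProductSpace

section LaplaceTransform

variable {α : Type*} [MeasurableSpace α] {μ : Measure α} {φ g : α → ℝ}

lemma pow_mul_exp_neg_mul_le {s t : ℝ} (hs : 0 ≤ s) (ht : 0 < t) (n : ℕ) :
    s ^ n * exp (-(t * s)) ≤ n.factorial * (2 / t) ^ n * exp (-(t / 2 * s)) := by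
  have hpow : (t / 2 * s) ^ n ≤ n.factorial * exp (t / 2 * s) := by
    have := pow_div_factorial_le_exp (x := t / 2 * s) (by positivity) n
    rw [div_le_iff₀ (by positivity)] at this
    linarith
  calc s ^ n * exp (-(t * s))
      = (2 / t) ^ n * (t / 2 * s) ^ n * exp (-(t * s)) := by
        rw [← mul_pow]; field_simp
    _ ≤ (2 / t) ^ n * (n.factorial * exp (t / 2 * s)) * exp (-(t * s)) := by gcongr
    _ = n.factorial * (2 / t) ^ n * exp (-(t / 2 * s)) := by
        rw [mul_assoc, mul_assoc, ← exp_add]; ring_nf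

theorem integrable_pow_mul_exp_neg_mul_mul
    (hφ : ∀ x, 0 ≤ φ x) (hφm : AEStronglyMeasurable φ μ)
    (hint : ∀ t, 0 < t → Integrable (fun x => exp (-(t * φ x)) * g x) μ)
    (n : ℕ) {t : ℝ} (ht : 0 < t) :
    Integrable (fun x => (-φ x) ^ n * exp (-(t * φ x)) * g x) μ := by
  refine ((hint (t / 2) (half_pos ht)).norm.const_mul (n.factorial * (2 / t) ^ n)).mono' ?_
    (ae_of_all _ fun x => ?_)
  · convert (hφm.neg.pow n).mul (hint t ht).1 using 1
    ext x
    simp only [Pi.mul_apply, Pi.pow_apply, Pi.neg_apply, mul_assoc]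
  · rw [norm_mul, norm_mul, norm_pow, norm_neg, norm_of_nonneg (hφ x),
      norm_of_nonneg (exp_pos _).le, norm_mul, norm_of_nonneg (exp_pos _).le, ← mul_assoc]
    exact mul_le_mul_of_nonneg_right (pow_mul_exp_neg_mul_le (hφ x) ht n) (norm_nonneg _)

theorem hasDerivAt_integral_pow_mul_exp_neg_mul_mul
    (hφ : ∀ x, 0 ≤ φ x) (hφm : AEStronglyMeasurable φ μ)
    (hint : ∀ t, 0 < t → Integrable (fun x => exp (-(t * φ x)) * g x) μ)
    (n : ℕ) {t : ℝ} (ht : 0 < t) :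
    HasDerivAt (fun s => ∫ x, (-φ x) ^ n * exp (-(s * φ x)) * g x ∂μ)
      (∫ x, (-φ x) ^ (n + 1) * exp (-(t * φ x)) * g x ∂μ) t := by
  refine (hasDerivAt_integral_of_dominated_loc_of_deriv_le
    (F := fun s x => (-φ x) ^ n * exp (-(s * φ x)) * g x)
    (F' := fun s x => (-φ x) ^ (n + 1) * exp (-(s * φ x)) * g x)
    (Metric.ball_mem_nhds t (half_pos ht))
    ?_ (integrable_pow_mul_exp_neg_mul_mul hφ hφm hint n ht)
    (integrable_pow_mul_exp_neg_mul_mul hφ hφm hint (n + 1) ht).1 ?_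
    (integrable_pow_mul_exp_neg_mul_mul hφ hφm hint (n + 1) (half_pos ht)).norm ?_).2
  · filter_upwards [Ioi_mem_nhds ht] with s hs
    exact (integrable_pow_mul_exp_neg_mul_mul hφ hφm hint n hs).1
  · refine ae_of_all _ fun x s hs => ?_
    have hs' : t / 2 < s := by
      rw [Metric.mem_ball, Real.dist_eq, abs_lt] at hs
      linarith
    rw [norm_mul, norm_mul, norm_mul, norm_mul, norm_of_nonneg (exp_pos _).le,
      norm_of_nonneg (exp_pos _).le]
    gcongr
    nlinarith [hφ x]
  · refine ae_of_all _ fun x s _ => ?_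
    have hexp : HasDerivAt (fun s => exp (-(s * φ x))) (-φ x * exp (-(s * φ x))) s := by
      simpa [mul_comm] using ((hasDerivAt_mul_const (φ x)).neg).exp
    exact ((hexp.const_mul ((-φ x) ^ n)).mul_const (g x)).congr_deriv (by ring)

theorem iteratedDeriv_integral_exp_neg_mul_mul
    (hφ : ∀ x, 0 ≤ φ x) (hφm : AEStronglyMeasurable φ μ)
    (hint : ∀ t, 0 < t → Integrable (fun x => exp (-(t * φ x)) * g x) μ)
    (n : ℕ) {t : ℝ} (ht : 0 < t) :
    iteratedDeriv n (fun s => ∫ x, exp (-(s * φ x)) * g x ∂μ) t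
      = ∫ x, (-φ x) ^ n * exp (-(t * φ x)) * g x ∂μ := by
  induction n generalizing t with
  | zero => simp
  | succ n ih =>
    have hev : iteratedDeriv n (fun s => ∫ x, exp (-(s * φ x)) * g x ∂μ)
        =ᶠ[𝓝 t] fun s => ∫ x, (-φ x) ^ n * exp (-(s * φ x)) * g x ∂μ := by
      filter_upwards [Ioi_mem_nhds ht] with s hs using ih hs
    rw [iteratedDeriv_succ, hev.deriv_eq]
    exact (hasDerivAt_integral_pow_mul_exp_neg_mul_mul hφ hφm hint n ht).deriv

theorem neg_one_pow_mul_iteratedDeriv_integral_exp_neg_mul_mul_nonneg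
    (hφ : ∀ x, 0 ≤ φ x) (hφm : AEStronglyMeasurable φ μ)
    (hint : ∀ t, 0 < t → Integrable (fun x => exp (-(t * φ x)) * g x) μ)
    (hg : ∀ x, 0 ≤ g x) (n : ℕ) {t : ℝ} (ht : 0 < t) :
    0 ≤ (-1) ^ n * iteratedDeriv n (fun s => ∫ x, exp (-(s * φ x)) * g x ∂μ) t := by
  rw [iteratedDeriv_integral_exp_neg_mul_mul hφ hφm hint n ht, ← integral_const_mul]
  refine integral_nonneg fun x => ?_
  have : (-1 : ℝ) ^ n * (-φ x) ^ n = φ x ^ n := by rw [← mul_pow]; simp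
  calc (0 : ℝ) ≤ φ x ^ n * exp (-(t * φ x)) * g x := by have := hφ x; have := hg x; positivity
    _ = _ := by rw [← this]; ring

end LaplaceTransform

theorem integrable_exp_neg_mul_sq_norm {V : Type*} [NormedAddCommGroup V] [InnerProductSpace ℝ V]
    [FiniteDimensional ℝ V] [MeasurableSpace V] [BorelSpace V] {b : ℝ} (hb : 0 < b) :
    Integrable (fun v : V => Real.exp (-(b * ‖v‖ ^ 2))) := by
  refine (GaussianFourier.integrable_cexp_neg_mul_sq_norm_add (V := V) (b := b) (by simpa) 0 0
    ).norm.congr (ae_of_all _ fun v => ?_)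
  simp [Complex.norm_exp, ← Complex.ofReal_pow]

theorem integrable_exp_neg_mul_sq_norm_mul_norm_charFun_sq {V : Type*} [NormedAddCommGroup V]
    [InnerProductSpace ℝ V] [FiniteDimensional ℝ V] [MeasurableSpace V] [BorelSpace V]
    (μ : Measure V) [IsFiniteMeasure μ] {b : ℝ} (hb : 0 < b) :
    Integrable (fun v => Real.exp (-(b * ‖v‖ ^ 2)) * ‖charFun μ v‖ ^ 2) :=
  (integrable_exp_neg_mul_sq_norm hb).mul_bdd
    (measurable_charFun.norm.pow_const 2).aestronglyMeasurable
    (ae_of_all _ fun v => by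
      rw [norm_pow, norm_norm]
      exact pow_le_pow_left₀ (norm_nonneg _) (norm_charFun_le v) 2)

section PositiveDefinite

variable {E : Type*} [NormedAddCommGroup E] [InnerProductSpace ℝ E] [MeasurableSpace E]
  [BorelSpace E] [SecondCountableTopology E]

open Complex in
theorem integral_prod_integral_mul_exp_inner_sub {μ ν : Measure E} [IsFiniteMeasure μ] [SFinite ν]
    {ψ : E → ℝ} (hψ : Integrable ψ ν) :
    ∫ p, ∫ ξ, (ψ ξ : ℂ) * cexp (⟪p.1 - p.2, ξ⟫ * I) ∂ν ∂μ.prod μ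
      = ((∫ ξ, ψ ξ * ‖charFun μ ξ‖ ^ 2 ∂ν : ℝ) : ℂ) := by
  have hint : Integrable
      (Function.uncurry fun (p : E × E) ξ => (ψ ξ : ℂ) * cexp (⟪p.1 - p.2, ξ⟫ * I))
      ((μ.prod μ).prod ν) := by
    refine ((integrable_const (1 : ℝ)).mul_prod hψ.norm).mono' ?_ (ae_of_all _ fun q => ?_)
    · have hexp : Continuous fun q : (E × E) × E => cexp (⟪q.1.1 - q.1.2, q.2⟫ * I) := by
        fun_prop
      exact (continuous_ofReal.comp_aestronglyMeasurable hψ.1.comp_snd).mul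
        hexp.aestronglyMeasurable
    · change ‖(ψ q.2 : ℂ) * cexp (⟪q.1.1 - q.1.2, q.2⟫ * I)‖ ≤ 1 * ‖ψ q.2‖
      rw [norm_mul, norm_exp_ofReal_mul_I, norm_real, mul_one, one_mul]
  have hfactor : ∀ ξ, ∫ p, (ψ ξ : ℂ) * cexp (⟪p.1 - p.2, ξ⟫ * I) ∂μ.prod μ
      = ((ψ ξ * ‖charFun μ ξ‖ ^ 2 : ℝ) : ℂ) := fun ξ => by
    have hsplit : ∀ p : E × E, cexp (⟪p.1 - p.2, ξ⟫ * I)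
        = cexp (⟪p.1, ξ⟫ * I) * cexp (⟪p.2, -ξ⟫ * I) := fun p => by
      rw [← Complex.exp_add, inner_sub_left, inner_neg_right]; push_cast; ring_nf
    simp_rw [hsplit]
    rw [integral_const_mul,
      integral_prod_mul (fun x => cexp (⟪x, ξ⟫ * I)) (fun y => cexp (⟪y, -ξ⟫ * I)),
      ← charFun_apply, ← charFun_apply, charFun_neg, mul_conj, normSq_eq_norm_sq]
    push_cast; ring
  rw [integral_integral_swap hint]
  simp_rw [hfactor]
  exact integral_complex_ofReal

end PositiveDefinite

lemma pi_div_rpow_half_eq {t : ℝ} (ht : 0 < t) (m : ℕ) :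
    (π / t) ^ ((m : ℝ) / 2) = (2 * π) ^ m * (4 * π * t) ^ (-(m : ℝ) / 2) := by
  have hsq : π / t = (2 * π) ^ 2 * (4 * π * t)⁻¹ := by field_simp; ring
  rw [hsq, mul_rpow (by positivity) (by positivity), ← rpow_natCast, ← rpow_mul (by positivity),
    inv_rpow (by positivity), ← rpow_neg (by positivity), ← rpow_natCast]
  congr 2 <;> push_cast <;> ring

open Complex in
theorem heatKernel_eq_integral {m : ℕ} {t : ℝ} (ht : 0 < t) (x y : EuclideanSpace ℝ (Fin m)) :
    (heatKernel m t x y : ℂ)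
      = ∫ ξ, ((((2 * π) ^ m)⁻¹ * Real.exp (-(t * ‖ξ‖ ^ 2)) : ℝ) : ℂ) * cexp (⟪x - y, ξ⟫ * I) := by
  have hgauss := GaussianFourier.integral_cexp_neg_mul_sq_norm_add
    (V := EuclideanSpace ℝ (Fin m)) (b := t) (by simpa) I (x - y)
  have hintegrand : ∀ ξ : EuclideanSpace ℝ (Fin m),
      ((((2 * π) ^ m)⁻¹ * Real.exp (-(t * ‖ξ‖ ^ 2)) : ℝ) : ℂ) * cexp (⟪x - y, ξ⟫ * I)
        = (((2 * π) ^ m)⁻¹ : ℂ) * cexp (-t * ‖ξ‖ ^ 2 + I * ⟪x - y, ξ⟫) := fun ξ => by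
    push_cast
    rw [mul_assoc, ← Complex.exp_add]
    ring_nf
  simp_rw [hintegrand]
  rw [integral_const_mul, hgauss, finrank_euclideanSpace_fin, I_sq,
    show ((m : ℂ) / 2) = (((m : ℝ) / 2 : ℝ) : ℂ) by push_cast; ring,
    ← ofReal_div, ← ofReal_cpow (by positivity), pi_div_rpow_half_eq ht, heatKernel]
  have hexp : cexp (-1 * (‖x - y‖ : ℂ) ^ 2 / (4 * t))
      = (Real.exp (-‖x - y‖ ^ 2 / (4 * t)) : ℂ) := by
    push_cast; ring_nf
  rw [hexp]
  push_cast
  field_simp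

theorem integrable_uncurry_heatKernel {m : ℕ} {t : ℝ} (ht : 0 < t)
    (μ : Measure (EuclideanSpace ℝ (Fin m))) [IsFiniteMeasure μ] :
    Integrable (Function.uncurry (heatKernel m t)) (μ.prod μ) := by
  refine (integrable_const ((4 * π * t) ^ (-(m : ℝ) / 2))).mono'
    (by unfold heatKernel; fun_prop) (ae_of_all _ fun p => ?_)
  have hexp : Real.exp (-‖p.1 - p.2‖ ^ 2 / (4 * t)) ≤ 1 :=
    exp_le_one_iff.2 (div_nonpos_of_nonpos_of_nonneg (by nlinarith [norm_nonneg (p.1 - p.2)])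
      (by positivity))
  rw [Function.uncurry_apply_pair, heatKernel, norm_mul, norm_of_nonneg (by positivity),
    norm_of_nonneg (exp_pos _).le]
  exact mul_le_of_le_one_right (by positivity) hexp

theorem heatContent_eq_integral {m : ℕ} {Ω : Set (EuclideanSpace ℝ (Fin m))} (hΩ : volume Ω ≠ ⊤)
    {t : ℝ} (ht : 0 < t) :
    heatContent m Ω t = ∫ ξ, Real.exp (-(t * ‖ξ‖ ^ 2))
      * (((2 * π) ^ m)⁻¹ * ‖charFun (volume.restrict Ω) ξ‖ ^ 2) := by
  have := isFiniteMeasure_restrict.2 hΩ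
  apply Complex.ofReal_injective
  rw [heatContent, integral_integral (integrable_uncurry_heatKernel ht _),
    ← integral_complex_ofReal]
  simp_rw [heatKernel_eq_integral ht]
  rw [integral_prod_integral_mul_exp_inner_sub ((integrable_exp_neg_mul_sq_norm ht).const_mul _)]
  congr 2
  ext ξ
  ring

theorem stmt_19_general (m : ℕ) (Ω : Set (EuclideanSpace ℝ (Fin m)))
    (hbd : Bornology.IsBounded Ω) :
    ∀ (k : ℕ) (t : ℝ), 0 < t →
      (-1 : ℝ) ^ k * iteratedDeriv (k + 1) (heatContent m Ω) t ≤ 0 := by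
  intro k t ht
  have hΩ : volume Ω ≠ ⊤ := hbd.measure_lt_top.ne
  have := isFiniteMeasure_restrict.2 hΩ
  set g : EuclideanSpace ℝ (Fin m) → ℝ :=
    fun ξ => ((2 * π) ^ m)⁻¹ * ‖charFun (volume.restrict Ω) ξ‖ ^ 2
  have hg_int : ∀ s, 0 < s → Integrable (fun ξ => Real.exp (-(s * ‖ξ‖ ^ 2)) * g ξ) := fun s hs =>
    ((integrable_exp_neg_mul_sq_norm_mul_norm_charFun_sq _ hs).const_mul ((2 * π) ^ m)⁻¹).congr
      (ae_of_all _ fun ξ => by ring)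
  have hH : heatContent m Ω =ᶠ[𝓝 t] fun s => ∫ ξ, Real.exp (-(s * ‖ξ‖ ^ 2)) * g ξ := by
    filter_upwards [Ioi_mem_nhds ht] with s hs using heatContent_eq_integral hΩ hs
  have h := neg_one_pow_mul_iteratedDeriv_integral_exp_neg_mul_mul_nonneg
    (φ := fun ξ : EuclideanSpace ℝ (Fin m) => ‖ξ‖ ^ 2) (fun _ => sq_nonneg _) (by fun_prop) hg_int
    (fun ξ => by positivity) (k + 1) ht
  rw [← hH.iteratedDeriv_eq, pow_succ] at h
  linarith

theorem stmt_19 (m : ℕ) (hm : 1 ≤ m) (Ω : Set (EuclideanSpace ℝ (Fin m)))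
    (hne : Ω.Nonempty) (hopen : IsOpen Ω) (hbd : Bornology.IsBounded Ω) :
    ∀ (k : ℕ) (t : ℝ), 0 < t →
      (-1 : ℝ) ^ k * iteratedDeriv (k + 1) (heatContent m Ω) t ≤ 0 :=
  stmt_19_general m Ω hbd
end
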